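/- Define f_ν(x) = ∫_{π[o,x]} n(H) dν(H), where n(H) is the unit normal of H pointing away from the halfspace containing the basepoint o. Then for all x, y ∈ Ω, |f_ν(x) − f_ν(y)| ≤ ν(π[x,y]); that is, f_ν is 1-Lipschitz from (Ω, d_ν) to ℝⁿ. -/

import Mathlib

open MeasureTheory Set

noncomputable section

/-- Euclidean space `ℝⁿ`. -/
abbrev Euc (n : ℕ) := EuclideanSpace ℝ (Fin n)

/-- The space of affine hyperplanes in `ℝⁿ`, encoded as pairs `(v, c)` with `‖v‖ = 1`,
representing the hyperplane `{x : ⟪x, v⟫ = c}`. -/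
abbrev Hyp (n : ℕ) := {p : Euc n × ℝ // ‖p.1‖ = 1}

/-- The hyperplane determined by `H`, as a subset of `ℝⁿ`. -/
def hset {n : ℕ} (H : Hyp n) : Set (Euc n) := {x | (inner ℝ x H.1.1 : ℝ) = H.1.2}

/-- `meets A = π A`: the set of hyperplanes intersecting `A`. -/
def meets {n : ℕ} (A : Set (Euc n)) : Set (Hyp n) := {H | (hset H ∩ A).Nonempty}

/-- The unit normal of `H` pointing out of the halfspace containing the basepoint `o`. -/
def nrm {n : ℕ} (o : Euc n) (H : Hyp n) : Euc n :=
  if (inner ℝ o H.1.1 : ℝ) < H.1.2 then H.1.1 else -H.1.1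

/-- `fnu ν o x = ∫_{π[o,x]} n(H) dν(H)`. -/
def fnu {n : ℕ} (ν : Measure (Hyp n)) (o : Euc n) (x : Euc n) : Euc n :=
  ∫ H in meets (segment ℝ o x), nrm o H ∂ν

/-- `sin α(v, H) = |⟪v, n(H)⟫| / |v|`, the sine of the angle between the line of `v`
and the hyperplane `H`. -/
def sinA {n : ℕ} (v : Euc n) (H : Hyp n) : ℝ := |(inner ℝ v H.1.1 : ℝ)| / ‖v‖

/-! A hyperplane `{z | ⟪z, v⟫ = c}` meets `[a, b]` iff `c` lies between `⟪a, v⟫` and `⟪b, v⟫`,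
so the triangle inequality for intervals of `ℝ` gives `π[o,x] ∆ π[o,y] ⊆ π[x,y]`. In
`f_ν(x) - f_ν(y)` the integrals of the unit field `n` over `π[o,x] ∩ π[o,y]` cancel, and what is
left has norm at most `ν(π[o,x] ∆ π[o,y]) ≤ ν(π[x,y])`. -/

open scoped symmDiff

theorem norm_setIntegral_sub_setIntegral_le {α E : Type*} [MeasurableSpace α]
    [NormedAddCommGroup E] [NormedSpace ℝ E] {μ : Measure α} {f : α → E} {s t : Set α} {C : ℝ}
    (hs : MeasurableSet s) (ht : MeasurableSet t) (hst : μ (s ∆ t) ≠ ⊤)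
    (hfs : IntegrableOn f s μ) (hft : IntegrableOn f t μ) (hC : ∀ x ∈ s ∆ t, ‖f x‖ ≤ C) :
    ‖∫ x in s, f x ∂μ - ∫ x in t, f x ∂μ‖ ≤ C * μ.real (s ∆ t) := by
  have hbound : ∀ x, ‖s.indicator f x - t.indicator f x‖ ≤ (s ∆ t).indicator (fun _ ↦ C) x := by
    intro x
    by_cases hxs : x ∈ s <;> by_cases hxt : x ∈ t <;>
      simp [hxs, hxt, mem_symmDiff, hC x]
  calc ‖∫ x in s, f x ∂μ - ∫ x in t, f x ∂μ‖
      = ‖∫ x, s.indicator f x - t.indicator f x ∂μ‖ := by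
        rw [integral_sub ((integrable_indicator_iff hs).2 hfs) ((integrable_indicator_iff ht).2 hft),
          integral_indicator hs, integral_indicator ht]
    _ ≤ ∫ x, (s ∆ t).indicator (fun _ ↦ C) x ∂μ :=
        norm_integral_le_of_norm_le ((integrable_indicator_iff (hs.symmDiff ht)).2
          (integrableOn_const hst)) (Filter.Eventually.of_forall hbound)
    _ = C * μ.real (s ∆ t) := by
        rw [integral_indicator_const _ (hs.symmDiff ht), smul_eq_mul, mul_comm]

lemma isCompact_segment {E : Type*} [AddCommGroup E] [Module ℝ E] [TopologicalSpace E]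
    [IsTopologicalAddGroup E] [ContinuousSMul ℝ E] (a b : E) : IsCompact (segment ℝ a b) := by
  rw [segment_eq_image_lineMap]
  exact isCompact_Icc.image AffineMap.lineMap_continuous

section Hyperplanes

variable {n : ℕ}

lemma mem_meets_segment_iff {a b : Euc n} {H : Hyp n} :
    H ∈ meets (segment ℝ a b) ↔ H.1.2 ∈ uIcc (inner ℝ a H.1.1) (inner ℝ b H.1.1) := by
  let φ : Euc n →ᵃ[ℝ] ℝ := ((innerSL ℝ H.1.1 : Euc n →L[ℝ] ℝ) : Euc n →ₗ[ℝ] ℝ).toAffineMap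
  have hφ : ∀ z, φ z = inner ℝ z H.1.1 := fun z ↦ real_inner_comm z _
  rw [← segment_eq_uIcc, ← hφ, ← hφ, ← image_segment]
  simp [meets, hset, Set.Nonempty, hφ, and_comm]

lemma meets_segment_subset_union (a b c : Euc n) :
    meets (segment ℝ a c) ⊆ meets (segment ℝ a b) ∪ meets (segment ℝ b c) := by
  intro H hH
  simpa only [mem_union, mem_meets_segment_iff] using
    uIcc_subset_uIcc_union_uIcc (mem_meets_segment_iff.1 hH)

lemma symmDiff_meets_segment_subset (a b c : Euc n) :
    meets (segment ℝ a b) ∆ meets (segment ℝ a c) ⊆ meets (segment ℝ b c) := by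
  rintro H (⟨hb, hc⟩ | ⟨hc, hb⟩)
  · rw [segment_symm]
    exact (meets_segment_subset_union a c b hb).resolve_left hc
  · exact (meets_segment_subset_union a b c hc).resolve_left hb

lemma isClosed_meets_segment (a b : Euc n) : IsClosed (meets (segment ℝ a b)) := by
  have : meets (segment ℝ a b) =
      {H : Hyp n | min (inner ℝ a H.1.1) (inner ℝ b H.1.1) ≤ H.1.2} ∩
        {H | H.1.2 ≤ max (inner ℝ a H.1.1) (inner ℝ b H.1.1)} := by
    ext H; exact mem_meets_segment_iff
  rw [this]
  exact (isClosed_le (by fun_prop) (by fun_prop)).inter (isClosed_le (by fun_prop) (by fun_prop))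

lemma measurable_nrm (o : Euc n) : Measurable (nrm o) :=
  Measurable.ite (measurableSet_lt (by fun_prop) (by fun_prop)) (by fun_prop) (by fun_prop)

lemma norm_nrm (o : Euc n) (H : Hyp n) : ‖nrm o H‖ = 1 := by
  unfold nrm; split_ifs <;> simp [H.2]

lemma integrableOn_nrm (o : Euc n) {ν : Measure (Hyp n)} {s : Set (Hyp n)} (hs : ν s < ⊤) :
    IntegrableOn (nrm o) s ν :=
  .of_bound hs (measurable_nrm o).aestronglyMeasurable 1 (ae_of_all _ fun H ↦ (norm_nrm o H).le)

end Hyperplanes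

theorem stmt3_general (n : ℕ) (Ω : Set (Euc n))
    (hΩc : Convex ℝ Ω) (ν : Measure (Hyp n))
    (hcpt : ∀ K ⊆ Ω, IsCompact K → ν (meets K) < ⊤)
    (o : Euc n) (ho : o ∈ Ω) :
    ∀ x ∈ Ω, ∀ y ∈ Ω, ‖fnu ν o x - fnu ν o y‖ ≤ (ν (meets (segment ℝ x y))).toReal := by
  intro x hx y hy
  have hfinite : ∀ a ∈ Ω, ∀ b ∈ Ω, ν (meets (segment ℝ a b)) < ⊤ := fun a ha b hb ↦
    hcpt _ (hΩc.segment_subset ha hb) (isCompact_segment a b)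
  have hsub := symmDiff_meets_segment_subset o x y
  calc ‖fnu ν o x - fnu ν o y‖
      ≤ 1 * ν.real (meets (segment ℝ o x) ∆ meets (segment ℝ o y)) :=
        norm_setIntegral_sub_setIntegral_le (isClosed_meets_segment o x).measurableSet
          (isClosed_meets_segment o y).measurableSet
          (measure_ne_top_of_subset hsub (hfinite x hx y hy).ne)
          (integrableOn_nrm o (hfinite o ho x hx)) (integrableOn_nrm o (hfinite o ho y hy))
          (fun H _ ↦ (norm_nrm o H).le)
    _ ≤ (ν (meets (segment ℝ x y))).toReal := by
        rw [one_mul]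
        exact measureReal_mono hsub (hfinite x hx y hy).ne

/-- `|f_ν(x) − f_ν(y)| ≤ ν(π[x,y])`, i.e. `f_ν` is 1-Lipschitz from
`(Ω, d_ν)` to `ℝⁿ`. -/
theorem stmt3 (n : ℕ) (hn : 2 ≤ n) (Ω : Set (Euc n)) (hΩo : IsOpen Ω) (hΩne : Ω.Nonempty)
    (hΩc : Convex ℝ Ω) (ν : Measure (Hyp n))
    (hpt : ∀ p ∈ Ω, ν (meets {p}) = 0)
    (hseg : ∀ x ∈ Ω, ∀ y ∈ Ω, x ≠ y → 0 < ν (meets (segment ℝ x y)))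
    (hcpt : ∀ K ⊆ Ω, IsCompact K → ν (meets K) < ⊤)
    (o : Euc n) (ho : o ∈ Ω) :
    ∀ x ∈ Ω, ∀ y ∈ Ω, ‖fnu ν o x - fnu ν o y‖ ≤ (ν (meets (segment ℝ x y))).toReal :=
  stmt3_general n Ω hΩc ν hcpt o ho
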